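/- arXiv:2108.11266 — 6 statements merged into one kernel-verified Lean document; each statement's English description precedes it below -/
import Mathlib

section
/- Let P be a real symmetric positive semidefinite n×n matrix of rank r, let H be an r×n matrix whose rows form an orthonormal basis of the image of P, and let λ > σ_max(P) where σ_max(P) is the largest eigenvalue of P. Then P⁺ − λ⁻¹ Hᵀ H is positive semidefinite with image equal to the image of P, where P⁺ denotes the Moore–Penrose pseudoinverse. -/
open Matrix

/-- The four Moore–Penrose conditions: `B` is the Moore–Penrose pseudoinverse of `A`. -/
def IsMoorePenroseInv {m n : ℕ} (A : Matrix (Fin m) (Fin n) ℝ)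
    (B : Matrix (Fin n) (Fin m) ℝ) : Prop :=
  A * B * A = A ∧ B * A * B = B ∧ (A * B)ᵀ = A * B ∧ (B * A)ᵀ = B * A

namespace Stmt3Aux

lemma matrix_ext_of_mulVec {m k : ℕ} {A B : Matrix (Fin m) (Fin k) ℝ}
    (h : ∀ v, A *ᵥ v = B *ᵥ v) : A = B := by
  ext i j
  have := congrFun (h (Pi.single j 1)) i
  simpa [Matrix.mulVec_single] using this

lemma psd_smul {n : ℕ} {A : Matrix (Fin n) (Fin n) ℝ} (hA : A.PosSemidef) {c : ℝ}
    (hc : 0 ≤ c) : (c • A).PosSemidef := by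
  refine ⟨?_, fun x => ?_⟩
  · have : (c • A)ᴴ = c • Aᴴ := by simp [Matrix.conjTranspose_smul]
    rw [Matrix.IsHermitian, this, hA.1.eq]
  · exact (hA.smul hc).2 x

lemma mp_trans {n : ℕ} {A B : Matrix (Fin n) (Fin n) ℝ} (hA : Aᵀ = A)
    (h : IsMoorePenroseInv A B) : IsMoorePenroseInv A Bᵀ := by
  obtain ⟨h1, h2, h3, h4⟩ := h
  refine ⟨?_, ?_, ?_, ?_⟩
  · calc A * Bᵀ * A = (Aᵀ * B * Aᵀ)ᵀ := by
          simp [Matrix.transpose_mul, hA, Matrix.mul_assoc]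
      _ = A := by rw [hA, h1, hA]
  · calc Bᵀ * A * Bᵀ = (B * Aᵀ * B)ᵀ := by
          simp [Matrix.transpose_mul, Matrix.mul_assoc]
      _ = Bᵀ := by rw [hA, h2]
  · have e1 : A * Bᵀ = B * A := by
      calc A * Bᵀ = (B * Aᵀ)ᵀ := by simp [Matrix.transpose_mul]
        _ = (B * A)ᵀ := by rw [hA]
        _ = B * A := h4
    rw [e1]; exact h4
  · have e1 : Bᵀ * A = A * B := by
      calc Bᵀ * A = (Aᵀ * B)ᵀ := by simp [Matrix.transpose_mul]
        _ = (A * B)ᵀ := by rw [hA]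
        _ = A * B := h3
    rw [e1]; exact h3

lemma mp_unique {n : ℕ} {A B C : Matrix (Fin n) (Fin n) ℝ}
    (hB : IsMoorePenroseInv A B) (hC : IsMoorePenroseInv A C) : B = C := by
  obtain ⟨hB1, hB2, hB3, hB4⟩ := hB
  obtain ⟨hC1, hC2, hC3, hC4⟩ := hC
  have e1 : A * B = A * C := by
    calc A * B = (A * B)ᵀ := hB3.symm
      _ = Bᵀ * Aᵀ := by simp [Matrix.transpose_mul]
      _ = Bᵀ * (A * C * A)ᵀ := by rw [hC1]
      _ = (Bᵀ * Aᵀ) * (A * C)ᵀ := by simp [Matrix.transpose_mul, Matrix.mul_assoc]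
      _ = (A * B)ᵀ * (A * C)ᵀ := by simp [Matrix.transpose_mul]
      _ = (A * B) * (A * C) := by rw [hB3, hC3]
      _ = (A * B * A) * C := by simp [Matrix.mul_assoc]
      _ = A * C := by rw [hB1]
  have e2 : B * A = C * A := by
    calc B * A = (B * A)ᵀ := hB4.symm
      _ = Aᵀ * Bᵀ := by simp [Matrix.transpose_mul]
      _ = (A * C * A)ᵀ * Bᵀ := by rw [hC1]
      _ = (C * A)ᵀ * ((B * A)ᵀ) := by simp [Matrix.transpose_mul, Matrix.mul_assoc]
      _ = (C * A) * (B * A) := by rw [hB4, hC4]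
      _ = C * (A * B * A) := by simp [Matrix.mul_assoc]
      _ = C * A := by rw [hB1]
  calc B = B * A * B := hB2.symm
    _ = C * A * B := by rw [e2]
    _ = C * (A * B) := by rw [Matrix.mul_assoc]
    _ = C * (A * C) := by rw [e1]
    _ = C * A * C := by rw [Matrix.mul_assoc]
    _ = C := hC2

end Stmt3Aux

set_option maxHeartbeats 800000 in
open Stmt3Aux in
theorem stmt3 (n r : ℕ) (P Pplus : Matrix (Fin n) (Fin n) ℝ)
    (hP : P.PosSemidef) (hrank : P.rank = r)
    (hPplus : IsMoorePenroseInv P Pplus)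
    (H : Matrix (Fin r) (Fin n) ℝ)
    (hortho : H * Hᵀ = 1)
    (hrange : LinearMap.range (Hᵀ).mulVecLin = LinearMap.range P.mulVecLin)
    (lam : ℝ) (hlam : ∀ i, hP.1.eigenvalues i < lam) :
    (Pplus - lam⁻¹ • (Hᵀ * H)).PosSemidef ∧
    LinearMap.range (Pplus - lam⁻¹ • (Hᵀ * H)).mulVecLin =
      LinearMap.range P.mulVecLin := by
  rcases Nat.eq_zero_or_pos n with hn | hn
  · subst hn
    refine ⟨⟨Subsingleton.elim _ _, fun x => ?_⟩, Subsingleton.elim _ _⟩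
    simp [dotProduct, Subsingleton.elim x 0]
  have hPsymm : Pᵀ = P := by
    rw [← Matrix.conjTranspose_eq_transpose_of_trivial]; exact hP.1.eq
  obtain ⟨h1, h2, h3, h4⟩ := hPplus
  set B := Pplus with hBdef
  have hBsymm : Bᵀ = B := mp_unique (mp_trans hPsymm ⟨h1, h2, h3, h4⟩) ⟨h1, h2, h3, h4⟩
  have hBP : P * B = B * P := by
    have h4' := h4
    rw [Matrix.transpose_mul, hPsymm, hBsymm] at h4'
    exact h4'
  have hQQ : (P * B) * (P * B) = P * B := by rw [← Matrix.mul_assoc, h1]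
  have hPQ : P * (P * B) = P := by rw [hBP, ← Matrix.mul_assoc, h1]
  have hBQ : B * (P * B) = B := by rw [← Matrix.mul_assoc]; exact h2
  have hQB : (P * B) * B = B := by rw [hBP]; exact h2
  have hQ'Q' : (Hᵀ * H) * (Hᵀ * H) = Hᵀ * H := by
    rw [Matrix.mul_assoc, ← Matrix.mul_assoc H Hᵀ H, hortho, Matrix.one_mul]
  have hQ'symm : (Hᵀ * H)ᵀ = Hᵀ * H := by
    rw [Matrix.transpose_mul, Matrix.transpose_transpose]
  have rQ'H : LinearMap.range (Hᵀ * H).mulVecLin = LinearMap.range (Hᵀ).mulVecLin := by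
    refine le_antisymm ?_ ?_
    · rw [Matrix.mulVecLin_mul]; exact LinearMap.range_comp_le_range _ _
    · have e : Hᵀ = (Hᵀ * H) * Hᵀ := by rw [Matrix.mul_assoc, hortho, Matrix.mul_one]
      conv_lhs => rw [e]
      rw [Matrix.mulVecLin_mul]; exact LinearMap.range_comp_le_range _ _
  have rQP : LinearMap.range (P * B).mulVecLin = LinearMap.range P.mulVecLin := by
    refine le_antisymm ?_ ?_
    · rw [Matrix.mulVecLin_mul]; exact LinearMap.range_comp_le_range _ _
    · conv_lhs => rw [← h1]
      rw [Matrix.mulVecLin_mul]; exact LinearMap.range_comp_le_range _ _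
  have rQQ' : LinearMap.range (P * B).mulVecLin = LinearMap.range (Hᵀ * H).mulVecLin := by
    rw [rQP, ← hrange, rQ'H]
  have hmem : ∀ (X : Matrix (Fin n) (Fin n) ℝ), X * X = X →
      ∀ v ∈ LinearMap.range X.mulVecLin, X *ᵥ v = v := by
    intro X hXX v hv
    obtain ⟨w, rfl⟩ := hv
    simp only [Matrix.mulVecLin_apply, Matrix.mulVec_mulVec, hXX]
  have hQ'Q : (Hᵀ * H) * (P * B) = P * B := by
    apply matrix_ext_of_mulVec
    intro v
    rw [← Matrix.mulVec_mulVec]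
    refine hmem _ hQ'Q' _ ?_
    rw [← rQQ']
    exact ⟨v, rfl⟩
  have hQQ'2 : (P * B) * (Hᵀ * H) = Hᵀ * H := by
    apply matrix_ext_of_mulVec
    intro v
    rw [← Matrix.mulVec_mulVec]
    refine hmem _ hQQ _ ?_
    rw [rQQ']
    exact ⟨v, rfl⟩
  have hQeq : P * B = Hᵀ * H := by
    calc P * B = (Hᵀ * H) * (P * B) := hQ'Q.symm
      _ = ((P * B)ᵀ * (Hᵀ * H)ᵀ)ᵀ := by
          rw [← Matrix.transpose_mul, Matrix.transpose_transpose]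
      _ = ((P * B) * (Hᵀ * H))ᵀ := by rw [h3, hQ'symm, Matrix.transpose_mul]
      _ = (Hᵀ * H)ᵀ := by rw [hQQ'2]
      _ = Hᵀ * H := hQ'symm
  have hlam0 : 0 < lam := by
    have i : Fin n := ⟨0, hn⟩
    exact lt_of_le_of_lt (hP.eigenvalues_nonneg i) (hlam i)
  -- spectral facts
  set V : Matrix (Fin n) (Fin n) ℝ := (hP.1.eigenvectorUnitary : Matrix (Fin n) (Fin n) ℝ)
    with hVdef
  have hVV : V * Vᴴ = 1 := by
    rw [← Matrix.star_eq_conjTranspose]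
    exact (Matrix.mem_unitaryGroup_iff).mp (hP.1.eigenvectorUnitary).2
  have hdiag : (RCLike.ofReal ∘ hP.1.eigenvalues : Fin n → ℝ) = hP.1.eigenvalues := by
    funext i; simp
  have hspec : P = V * Matrix.diagonal (hP.1.eigenvalues) * Vᴴ := by
    rw [← hdiag, ← Matrix.star_eq_conjTranspose]
    exact hP.1.spectral_theorem
  have hd2 : Matrix.diagonal (fun i => lam - hP.1.eigenvalues i)
      = lam • (1 : Matrix (Fin n) (Fin n) ℝ) - Matrix.diagonal hP.1.eigenvalues := by
    ext i j
    by_cases hij : i = j <;> simp [Matrix.diagonal_apply, Matrix.one_apply, hij]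
  have hA : lam • (1 : Matrix (Fin n) (Fin n) ℝ) - P
      = V * Matrix.diagonal (fun i => lam - hP.1.eigenvalues i) * Vᴴ := by
    rw [hd2, Matrix.mul_sub, Matrix.sub_mul, Matrix.mul_smul, Matrix.mul_one,
      Matrix.smul_mul, hVV]
    congr 1
  have hApsd : (lam • (1 : Matrix (Fin n) (Fin n) ℝ) - P).PosSemidef := by
    rw [hA]
    exact (Matrix.posSemidef_diagonal_iff.mpr fun i => by
      linarith [hlam i]).mul_mul_conjTranspose_same V
  have hAdet : IsUnit (lam • (1 : Matrix (Fin n) (Fin n) ℝ) - P).det := by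
    rw [hA, Matrix.det_mul, Matrix.det_mul, Matrix.det_diagonal]
    have h5 : V.det * Vᴴ.det = 1 := by rw [← Matrix.det_mul, hVV, Matrix.det_one]
    have h6 : (0:ℝ) < ∏ i, (lam - hP.1.eigenvalues i) :=
      Finset.prod_pos fun i _ => by linarith [hlam i]
    have h7 : V.det * (∏ i, (lam - hP.1.eigenvalues i)) * Vᴴ.det
        = ∏ i, (lam - hP.1.eigenvalues i) := by
      calc V.det * (∏ i, (lam - hP.1.eigenvalues i)) * Vᴴ.det
          = (∏ i, (lam - hP.1.eigenvalues i)) * (V.det * Vᴴ.det) := by ring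
        _ = ∏ i, (lam - hP.1.eigenvalues i) := by rw [h5, mul_one]
    rw [h7]
    exact h6.ne'.isUnit
  -- key positive semidefiniteness
  obtain ⟨S, hSherm, hSS⟩ : ∃ S : Matrix (Fin n) (Fin n) ℝ, Sᴴ = S ∧ S * S = P :=
    by
    open MatrixOrder in
    obtain ⟨X, hX, -, hXX⟩ := CFC.exists_sqrt_of_isSelfAdjoint_of_quasispectrumRestricts
      hP.isHermitian (QuasispectrumRestricts.nnreal_of_nonneg hP.nonneg)
    exact ⟨X, hX, hXX⟩
  have hkey : (P - lam⁻¹ • (P * P)).PosSemidef := by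
    have h7 := hApsd.conjTranspose_mul_mul_same S
    have h8 : Sᴴ * (lam • (1 : Matrix (Fin n) (Fin n) ℝ) - P) * S
        = lam • P - P * P := by
      rw [hSherm, Matrix.mul_sub, Matrix.sub_mul, Matrix.mul_smul, Matrix.mul_one,
        Matrix.smul_mul, hSS]
      congr 1
      rw [← hSS]
      simp only [Matrix.mul_assoc]
    have h9 : P - lam⁻¹ • (P * P) = lam⁻¹ • (lam • P - P * P) := by
      rw [smul_sub, smul_smul, inv_mul_cancel₀ hlam0.ne', one_smul]
    rw [h9, ← h8]
    exact psd_smul h7 (by positivity)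
  have e3 : B * (P * P) * B = Hᵀ * H := by
    rw [← Matrix.mul_assoc B P P, ← hBP, h1]
    exact hQeq
  have hMrepr : B - lam⁻¹ • (Hᵀ * H) = Bᵀ * (P - lam⁻¹ • (P * P)) * B := by
    have e4 : B * (P - lam⁻¹ • (P * P)) * B
        = B * P * B - lam⁻¹ • (B * (P * P) * B) := by
      rw [Matrix.mul_sub, Matrix.sub_mul, Matrix.mul_smul, Matrix.smul_mul]
    rw [hBsymm, e4, h2, e3]
  have hpsd : (B - lam⁻¹ • (Hᵀ * H)).PosSemidef := by
    rw [hMrepr, ← Matrix.conjTranspose_eq_transpose_of_trivial]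
    exact hkey.conjTranspose_mul_mul_same B
  refine ⟨hpsd, ?_⟩
  -- range part
  have hQ'B : (Hᵀ * H) * B = B := by rw [← hQeq]; exact hQB
  have hQ'P : (Hᵀ * H) * P = P := by rw [← hQeq]; exact h1
  have hPQ' : P * (Hᵀ * H) = P := by rw [← hQeq]; exact hPQ
  have hQM : (Hᵀ * H) * (B - lam⁻¹ • (Hᵀ * H)) = B - lam⁻¹ • (Hᵀ * H) := by
    rw [Matrix.mul_sub, Matrix.mul_smul, hQ'B, hQ'Q']
  have hMP2 : (B - lam⁻¹ • (Hᵀ * H)) * P = P * B - lam⁻¹ • P := by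
    rw [Matrix.sub_mul, Matrix.smul_mul, hQ'P, ← hBP]
  have hPM2 : P * (B - lam⁻¹ • (Hᵀ * H)) = P * B - lam⁻¹ • P := by
    rw [Matrix.mul_sub, Matrix.mul_smul, hPQ']
  have hAinv1 : (lam • (1 : Matrix (Fin n) (Fin n) ℝ) - P)
      * (lam • (1 : Matrix (Fin n) (Fin n) ℝ) - P)⁻¹ = 1 := Matrix.mul_nonsing_inv _ hAdet
  have hAinv2 : (lam • (1 : Matrix (Fin n) (Fin n) ℝ) - P)⁻¹
      * (lam • (1 : Matrix (Fin n) (Fin n) ℝ) - P) = 1 := Matrix.nonsing_inv_mul _ hAdet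
  set Am := lam • (1 : Matrix (Fin n) (Fin n) ℝ) - P with hAm
  set Mm := B - lam⁻¹ • (Hᵀ * H) with hMm
  clear_value Am Mm
  have hcomm : Mm * Am = Am * Mm := by
    rw [hAm, Matrix.mul_sub, Matrix.sub_mul, hMP2, hPM2, Matrix.mul_smul, Matrix.smul_mul,
      Matrix.mul_one, Matrix.one_mul]
  have hcomminv : Mm * Am⁻¹ = Am⁻¹ * Mm := by
    calc Mm * Am⁻¹ = 1 * (Mm * Am⁻¹) := by rw [Matrix.one_mul]
      _ = (Am⁻¹ * Am) * (Mm * Am⁻¹) := by rw [hAinv2]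
      _ = Am⁻¹ * ((Am * Mm) * Am⁻¹) := by simp only [Matrix.mul_assoc]
      _ = Am⁻¹ * ((Mm * Am) * Am⁻¹) := by rw [hcomm]
      _ = Am⁻¹ * (Mm * (Am * Am⁻¹)) := by simp only [Matrix.mul_assoc]
      _ = Am⁻¹ * Mm := by rw [hAinv1, Matrix.mul_one]
  have e6 : Am * (P * B) = lam • (P * B) - P := by
    rw [hAm, Matrix.sub_mul, Matrix.smul_mul, Matrix.one_mul, hPQ]
  have hMN : Mm * (lam • (Am⁻¹ * P)) = Hᵀ * H := by
    calc Mm * (lam • (Am⁻¹ * P)) = lam • (Mm * (Am⁻¹ * P)) := by rw [Matrix.mul_smul]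
      _ = lam • ((Mm * Am⁻¹) * P) := by rw [Matrix.mul_assoc]
      _ = lam • ((Am⁻¹ * Mm) * P) := by rw [hcomminv]
      _ = lam • (Am⁻¹ * (Mm * P)) := by rw [Matrix.mul_assoc]
      _ = lam • (Am⁻¹ * (P * B - lam⁻¹ • P)) := by rw [hMP2]
      _ = Am⁻¹ * (lam • (P * B - lam⁻¹ • P)) := by rw [Matrix.mul_smul]
      _ = Am⁻¹ * (lam • (P * B) - P) := by
          rw [smul_sub, smul_smul, mul_inv_cancel₀ hlam0.ne', one_smul]
      _ = Am⁻¹ * (Am * (P * B)) := by rw [e6]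
      _ = (Am⁻¹ * Am) * (P * B) := by rw [Matrix.mul_assoc]
      _ = P * B := by rw [hAinv2, Matrix.one_mul]
      _ = Hᵀ * H := hQeq
  have r1 : LinearMap.range Mm.mulVecLin ≤ LinearMap.range (Hᵀ * H).mulVecLin := by
    conv_lhs => rw [← hQM]
    rw [Matrix.mulVecLin_mul]; exact LinearMap.range_comp_le_range _ _
  have r2 : LinearMap.range (Hᵀ * H).mulVecLin ≤ LinearMap.range Mm.mulVecLin := by
    rw [← hMN, Matrix.mulVecLin_mul]; exact LinearMap.range_comp_le_range _ _
  exact (le_antisymm r1 r2).trans (rQ'H.trans hrange)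
end

section
/- Let P be a real symmetric positive semidefinite n×n matrix, H an r×n matrix whose rows form an orthonormal basis of Im(P), and λ > σ_max(P). Define P̃ = (P⁺ − λ⁻¹ HᵀH)⁺ (Moore–Penrose pseudoinverse). Then P̃ is symmetric positive semidefinite, Im(P̃) = Im(P), and P̃ ≥ P in the Loewner order. -/
open Matrix

/-- Uniqueness of the Moore–Penrose pseudoinverse. -/
lemma mp_unique {m n : ℕ} {A : Matrix (Fin m) (Fin n) ℝ} {B C : Matrix (Fin n) (Fin m) ℝ}
    (hB : IsMoorePenroseInv A B) (hC : IsMoorePenroseInv A C) : B = C := by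
  obtain ⟨hB1, hB2, hB3, hB4⟩ := hB
  obtain ⟨hC1, hC2, hC3, hC4⟩ := hC
  have e1 : A * C = A * B := by
    calc A * C = (A * C)ᵀ := hC3.symm
      _ = Cᵀ * Aᵀ := by rw [transpose_mul]
      _ = Cᵀ * (A * B * A)ᵀ := by rw [hB1]
      _ = Cᵀ * (Aᵀ * (A * B)ᵀ) := by rw [transpose_mul]
      _ = Cᵀ * (Aᵀ * (A * B)) := by rw [hB3]
      _ = (Cᵀ * Aᵀ) * (A * B) := by rw [Matrix.mul_assoc]
      _ = (A * C)ᵀ * (A * B) := by rw [← transpose_mul]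
      _ = (A * C) * (A * B) := by rw [hC3]
      _ = ((A * C) * A) * B := by rw [Matrix.mul_assoc (A * C) A B]
      _ = A * B := by rw [hC1]
  have e2 : C * A = B * A := by
    calc C * A = (C * A)ᵀ := hC4.symm
      _ = Aᵀ * Cᵀ := by rw [transpose_mul]
      _ = (A * (B * A))ᵀ * Cᵀ := by rw [← Matrix.mul_assoc, hB1]
      _ = ((B * A)ᵀ * Aᵀ) * Cᵀ := by rw [transpose_mul]
      _ = ((B * A) * Aᵀ) * Cᵀ := by rw [hB4]
      _ = (B * A) * (Aᵀ * Cᵀ) := by rw [Matrix.mul_assoc]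
      _ = (B * A) * (C * A)ᵀ := by rw [← transpose_mul]
      _ = (B * A) * (C * A) := by rw [hC4]
      _ = B * (A * (C * A)) := by rw [Matrix.mul_assoc]
      _ = B * (A * C * A) := by rw [← Matrix.mul_assoc A C A]
      _ = B * A := by rw [hC1]
  symm
  calc C = C * A * C := hC2.symm
    _ = (B * A) * C := by rw [e2]
    _ = B * (A * C) := by rw [Matrix.mul_assoc]
    _ = B * (A * B) := by rw [e1]
    _ = B * A * B := by rw [← Matrix.mul_assoc]
    _ = B := hB2

/-- The transpose of a Moore–Penrose pseudoinverse is the pseudoinverse of the transpose. -/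
lemma mp_transpose {m n : ℕ} {A : Matrix (Fin m) (Fin n) ℝ} {B : Matrix (Fin n) (Fin m) ℝ}
    (h : IsMoorePenroseInv A B) : IsMoorePenroseInv Aᵀ Bᵀ := by
  obtain ⟨h1, h2, h3, h4⟩ := h
  refine ⟨?_, ?_, ?_, ?_⟩
  · rw [← transpose_mul, ← transpose_mul, ← Matrix.mul_assoc, h1]
  · rw [← transpose_mul, ← transpose_mul, ← Matrix.mul_assoc, h2]
  · rw [← transpose_mul, transpose_transpose, h4]
  · rw [← transpose_mul, transpose_transpose, h3]

lemma eq_of_mulVec_eq {k l : ℕ} {A B : Matrix (Fin k) (Fin l) ℝ}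
    (h : ∀ v, A *ᵥ v = B *ᵥ v) : A = B := by
  ext i j
  have := congrFun (h (Pi.single j 1)) i
  simpa using this

lemma posDef_conj {k : ℕ} {A U : Matrix (Fin k) (Fin k) ℝ}
    (hA : A.PosDef) (hU : U * Uᴴ = 1) : (U * A * Uᴴ).PosDef := by
  have hy : ∀ x : Fin k → ℝ, x ≠ 0 → Uᴴ *ᵥ x ≠ 0 := by
    intro x hx h0
    apply hx
    calc x = (U * Uᴴ) *ᵥ x := by rw [hU, one_mulVec]
      _ = U *ᵥ (Uᴴ *ᵥ x) := by rw [← mulVec_mulVec]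
      _ = 0 := by rw [h0, mulVec_zero]
  have h2 : (Uᴴᴴ * A * Uᴴ).PosDef := by
    refine posDef_iff_dotProduct_mulVec.mpr ⟨isHermitian_conjTranspose_mul_mul _ hA.1, fun x hx => ?_⟩
    simpa only [star_mulVec, dotProduct_mulVec, vecMul_vecMul] using (posDef_iff_dotProduct_mulVec.mp hA).2 (x := Uᴴ *ᵥ x) (hy x hx)
  simpa only [conjTranspose_conjTranspose] using h2

theorem stmt4 (n r : ℕ) (P Pplus Ptil : Matrix (Fin n) (Fin n) ℝ)
    (hP : P.PosSemidef)
    (hPplus : IsMoorePenroseInv P Pplus)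
    (H : Matrix (Fin r) (Fin n) ℝ)
    (hortho : H * Hᵀ = 1)
    (hrange : LinearMap.range (Hᵀ).mulVecLin = LinearMap.range P.mulVecLin)
    (lam : ℝ) (hlam : ∀ i, hP.1.eigenvalues i < lam)
    (hPtil : IsMoorePenroseInv (Pplus - lam⁻¹ • (Hᵀ * H)) Ptil) :
    Ptil.PosSemidef ∧
    LinearMap.range Ptil.mulVecLin = LinearMap.range P.mulVecLin ∧
    (Ptil - P).PosSemidef := by
  classical
  rcases Nat.eq_zero_or_pos n with hn | hn
  · subst hn
    have h0 : ∀ (X : Matrix (Fin 0) (Fin 0) ℝ), X = 0 := by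
      intro X; ext i j; exact i.elim0
    have hsub : ∀ (s : Submodule ℝ (Fin 0 → ℝ)) (x : Fin 0 → ℝ), x ∈ s := by
      intro s x
      have : x = 0 := funext fun i => i.elim0
      rw [this]; exact s.zero_mem
    refine ⟨?_, ?_, ?_⟩
    · rw [h0 Ptil]; exact Matrix.PosSemidef.zero
    · ext x; simp [hsub]
    · rw [h0 (Ptil - P)]; exact Matrix.PosSemidef.zero
  -- main case
  have hPsym : Pᵀ = P := by
    rw [← conjTranspose_eq_transpose_of_trivial]; exact hP.1
  have hPplusT : IsMoorePenroseInv P Pplusᵀ := by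
    have := mp_transpose hPplus
    rwa [hPsym] at this
  have hPplusSym : Pplusᵀ = Pplus := mp_unique hPplusT hPplus
  obtain ⟨h1, h2, h3, h4⟩ := hPplus
  have hcomm : Pplus * P = P * Pplus := by
    calc Pplus * P = (Pplus * P)ᵀ := h4.symm
      _ = Pᵀ * Pplusᵀ := by rw [transpose_mul]
      _ = P * Pplus := by rw [hPsym, hPplusSym]
  set K : Matrix (Fin n) (Fin n) ℝ := Hᵀ * H with hKdef
  have hKsym : Kᵀ = K := by rw [hKdef, transpose_mul, transpose_transpose]
  have hKK : K * K = K := by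
    rw [hKdef, Matrix.mul_assoc Hᵀ H (Hᵀ * H), ← Matrix.mul_assoc H Hᵀ H, hortho,
      Matrix.one_mul]
  have hKHt : K * Hᵀ = Hᵀ := by
    rw [hKdef, Matrix.mul_assoc, hortho, Matrix.mul_one]
  have hKP : K * P = P := by
    apply eq_of_mulVec_eq
    intro v
    have hmem : P *ᵥ v ∈ LinearMap.range (Hᵀ).mulVecLin := by
      rw [hrange]; exact ⟨v, rfl⟩
    obtain ⟨w, hw⟩ := hmem
    simp only [mulVecLin_apply] at hw
    calc (K * P) *ᵥ v = K *ᵥ (P *ᵥ v) := by rw [← mulVec_mulVec]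
      _ = K *ᵥ (Hᵀ *ᵥ w) := by rw [hw]
      _ = (K * Hᵀ) *ᵥ w := by rw [mulVec_mulVec]
      _ = Hᵀ *ᵥ w := by rw [hKHt]
      _ = P *ᵥ v := hw
  have hPK : P * K = P := by
    have hT := congrArg Matrix.transpose hKP
    rwa [transpose_mul, hKsym, hPsym] at hT
  have hBK : (P * Pplus) * K = K := by
    apply eq_of_mulVec_eq
    intro v
    have hmem : K *ᵥ v ∈ LinearMap.range P.mulVecLin := by
      rw [← hrange]
      exact ⟨H *ᵥ v, by rw [mulVecLin_apply, mulVec_mulVec]⟩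
    obtain ⟨w, hw⟩ := hmem
    simp only [mulVecLin_apply] at hw
    calc (P * Pplus * K) *ᵥ v = (P * Pplus) *ᵥ (K *ᵥ v) := by rw [← mulVec_mulVec]
      _ = (P * Pplus) *ᵥ (P *ᵥ w) := by rw [hw]
      _ = (P * Pplus * P) *ᵥ w := by rw [mulVec_mulVec]
      _ = P *ᵥ w := by rw [h1]
      _ = K *ᵥ v := hw
  have hKeq : K = P * Pplus := by
    have hT := congrArg Matrix.transpose hBK
    rw [transpose_mul, hKsym, h3] at hT
    -- hT : K * (P * Pplus) = K
    have hKB : K * (P * Pplus) = P * Pplus := by rw [← Matrix.mul_assoc, hKP]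
    rw [hKB] at hT
    exact hT.symm
  have hKeq2 : K = Pplus * P := by rw [hKeq, ← hcomm]
  have hKPplus : K * Pplus = Pplus := by rw [hKeq2]; exact h2
  have hPplusK : Pplus * K = Pplus := by
    rw [hKeq, ← Matrix.mul_assoc]; exact h2
  have hlam0 : 0 < lam :=
    lt_of_le_of_lt (hP.eigenvalues_nonneg ⟨0, hn⟩) (hlam ⟨0, hn⟩)
  set M : Matrix (Fin n) (Fin n) ℝ := lam • 1 - P with hMdef
  have hMPdef : M.PosDef := by
    set U : Matrix (Fin n) (Fin n) ℝ := (hP.1.eigenvectorUnitary : Matrix (Fin n) (Fin n) ℝ)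
      with hUdef
    have hU1 : U * Uᴴ = 1 := by
      have := mem_unitaryGroup_iff.mp (hP.1.eigenvectorUnitary).2
      rwa [← star_eq_conjTranspose]
    have hdiag : (diagonal (fun i => lam - hP.1.eigenvalues i) :
        Matrix (Fin n) (Fin n) ℝ).PosDef :=
      Matrix.PosDef.diagonal (fun i => sub_pos.mpr (hlam i))
    have e : (diagonal (fun i => lam - hP.1.eigenvalues i) : Matrix (Fin n) (Fin n) ℝ)
        = lam • 1 - diagonal (RCLike.ofReal ∘ hP.1.eigenvalues) := by
      ext i j
      by_cases h : i = j <;> simp [diagonal, Matrix.one_apply, h]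
    have hM_eq : M = U * diagonal (fun i => lam - hP.1.eigenvalues i) * Uᴴ := by
      rw [e, Matrix.mul_sub, Matrix.sub_mul]
      have t1 : U * (lam • (1 : Matrix (Fin n) (Fin n) ℝ)) * Uᴴ = lam • 1 := by
        rw [Matrix.mul_smul, Matrix.mul_one, Matrix.smul_mul, hU1]
      have t2 : U * diagonal (RCLike.ofReal ∘ hP.1.eigenvalues) * Uᴴ = P := by
        have := hP.1.spectral_theorem
        rw [Unitary.conjStarAlgAut_apply, star_eq_conjTranspose] at this
        exact this.symm
      rw [t1, t2, hMdef]
    rw [hM_eq]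
    exact posDef_conj hdiag hU1
  have hMdet : IsUnit M.det := hMPdef.det_pos.ne'.isUnit
  have hMM : M * M⁻¹ = 1 := Matrix.mul_nonsing_inv M hMdet
  have hM'M : M⁻¹ * M = 1 := Matrix.nonsing_inv_mul M hMdet
  have comm_inv : ∀ X : Matrix (Fin n) (Fin n) ℝ, X * M = M * X → X * M⁻¹ = M⁻¹ * X := by
    intro X hX
    calc X * M⁻¹ = (M⁻¹ * M) * (X * M⁻¹) := by rw [hM'M, Matrix.one_mul]
      _ = M⁻¹ * (M * (X * M⁻¹)) := by rw [Matrix.mul_assoc]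
      _ = M⁻¹ * ((M * X) * M⁻¹) := by rw [← Matrix.mul_assoc M X M⁻¹]
      _ = M⁻¹ * ((X * M) * M⁻¹) := by rw [hX]
      _ = M⁻¹ * (X * (M * M⁻¹)) := by rw [Matrix.mul_assoc X M M⁻¹]
      _ = M⁻¹ * X := by rw [hMM, Matrix.mul_one]
  have hPM : P * M = M * P := by
    rw [hMdef]
    simp only [Matrix.mul_sub, Matrix.sub_mul, Matrix.mul_smul, Matrix.smul_mul,
      Matrix.mul_one, Matrix.one_mul]
  have hKM : K * M = M * K := by
    rw [hMdef]
    simp only [Matrix.mul_sub, Matrix.sub_mul, Matrix.mul_smul, Matrix.smul_mul,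
      Matrix.mul_one, Matrix.one_mul, hKP, hPK]
  have hPplusM : Pplus * M = M * Pplus := by
    rw [hMdef]
    simp only [Matrix.mul_sub, Matrix.sub_mul, Matrix.mul_smul, Matrix.smul_mul,
      Matrix.mul_one, Matrix.one_mul, hcomm]
  have hPMi : P * M⁻¹ = M⁻¹ * P := comm_inv P hPM
  have hKMi : K * M⁻¹ = M⁻¹ * K := comm_inv K hKM
  have hPplusMi : Pplus * M⁻¹ = M⁻¹ * Pplus := comm_inv Pplus hPplusM
  have hMsym : Mᵀ = M := by
    rw [hMdef, transpose_sub, transpose_smul, transpose_one, hPsym]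
  have hMiSym : M⁻¹ᵀ = M⁻¹ := by rw [Matrix.transpose_nonsing_inv, hMsym]
  set Q : Matrix (Fin n) (Fin n) ℝ := lam • (M⁻¹ * P) with hQdef
  have hQsym : Qᵀ = Q := by
    rw [hQdef, transpose_smul, transpose_mul, hMiSym, hPsym, ← hPMi]
  have hMK : M * K = lam • K - P := by
    rw [hMdef, Matrix.sub_mul, Matrix.smul_mul, Matrix.one_mul, hPK]
  have p1 : Pplus * (M⁻¹ * P) = M⁻¹ * K := by
    rw [← Matrix.mul_assoc, hPplusMi, Matrix.mul_assoc, ← hKeq2]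
  have p2 : K * (M⁻¹ * P) = M⁻¹ * P := by
    rw [← Matrix.mul_assoc, hKMi, Matrix.mul_assoc, hKP]
  set A : Matrix (Fin n) (Fin n) ℝ := Pplus - lam⁻¹ • K with hAdef
  have hAsym : Aᵀ = A := by
    rw [hAdef, transpose_sub, transpose_smul, hPplusSym, hKsym]
  have hAQ : A * Q = K := by
    calc A * Q = Pplus * Q - (lam⁻¹ • K) * Q := by rw [hAdef, Matrix.sub_mul]
      _ = lam • (Pplus * (M⁻¹ * P)) - lam⁻¹ • (lam • (K * (M⁻¹ * P))) := by
          rw [hQdef, Matrix.mul_smul, Matrix.smul_mul, Matrix.mul_smul]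
      _ = lam • (M⁻¹ * K) - (lam⁻¹ * lam) • (M⁻¹ * P) := by
          rw [p1, p2, smul_smul]
      _ = M⁻¹ * (lam • K) - M⁻¹ * P := by
          rw [inv_mul_cancel₀ hlam0.ne', one_smul, Matrix.mul_smul]
      _ = M⁻¹ * (lam • K - P) := by rw [Matrix.mul_sub]
      _ = M⁻¹ * (M * K) := by rw [hMK]
      _ = (M⁻¹ * M) * K := by rw [Matrix.mul_assoc]
      _ = K := by rw [hM'M, Matrix.one_mul]
  have hQA : Q * A = K := by
    have hT := congrArg Matrix.transpose hAQ
    rwa [transpose_mul, hAsym, hQsym, hKsym] at hT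
  have hKA : K * A = A := by
    rw [hAdef, Matrix.mul_sub, Matrix.mul_smul, hKPplus, hKK]
  have hKQ : K * Q = Q := by
    rw [hQdef, Matrix.mul_smul, p2]
  have hMPQ : IsMoorePenroseInv A Q := by
    refine ⟨?_, ?_, ?_, ?_⟩
    · rw [hAQ, hKA]
    · rw [hQA, hKQ]
    · rw [hAQ, hKsym]
    · rw [hQA, hKsym]
  have hPtilQ : Ptil = Q := mp_unique hPtil hMPQ
  have hMP_eq : M * P = lam • P - P * P := by
    rw [hMdef, Matrix.sub_mul, Matrix.smul_mul, Matrix.one_mul]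
  have hQP : Q - P = P * M⁻¹ * P := by
    calc Q - P = lam • (M⁻¹ * P) - (M⁻¹ * M) * P := by rw [hQdef, hM'M, Matrix.one_mul]
      _ = M⁻¹ * (lam • P) - M⁻¹ * (M * P) := by rw [Matrix.mul_smul, Matrix.mul_assoc]
      _ = M⁻¹ * (lam • P - M * P) := by rw [Matrix.mul_sub]
      _ = M⁻¹ * (P * P) := by rw [hMP_eq, sub_sub_cancel]
      _ = (M⁻¹ * P) * P := by rw [Matrix.mul_assoc]
      _ = P * M⁻¹ * P := by rw [← hPMi]
  have hPMP : (P * M⁻¹ * P).PosSemidef := by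
    have := (hMPdef.inv).posSemidef.mul_mul_conjTranspose_same P
    rwa [conjTranspose_eq_transpose_of_trivial, hPsym] at this
  have hQpsd : Q.PosSemidef := by
    have hQ_eq : Q = P * M⁻¹ * P + P := by rw [← hQP]; abel
    rw [hQ_eq]
    exact hPMP.add hP
  refine ⟨?_, ?_, ?_⟩
  · rw [hPtilQ]; exact hQpsd
  · rw [hPtilQ]
    have e1 : Q = P * (lam • M⁻¹) := by
      rw [hQdef, Matrix.mul_smul, hPMi]
    have e2 : P = Q * (lam⁻¹ • M) := by
      calc P = (M⁻¹ * M) * P := by rw [hM'M, Matrix.one_mul]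
        _ = M⁻¹ * (M * P) := by rw [Matrix.mul_assoc]
        _ = M⁻¹ * (P * M) := by rw [hPM]
        _ = (M⁻¹ * P) * M := by rw [Matrix.mul_assoc]
        _ = ((lam * lam⁻¹) • (M⁻¹ * P)) * M := by
            rw [mul_inv_cancel₀ hlam0.ne', one_smul]
        _ = (lam • (M⁻¹ * P)) * (lam⁻¹ • M) := by
            simp only [Matrix.smul_mul, Matrix.mul_smul, smul_smul]
            rw [mul_comm lam lam⁻¹]
        _ = Q * (lam⁻¹ • M) := by rw [hQdef]
    have r1 : LinearMap.range Q.mulVecLin ≤ LinearMap.range P.mulVecLin := by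
      rw [e1, Matrix.mulVecLin_mul]
      exact LinearMap.range_comp_le_range _ _
    have r2 : LinearMap.range P.mulVecLin ≤ LinearMap.range Q.mulVecLin := by
      rw [e2, Matrix.mulVecLin_mul]
      exact LinearMap.range_comp_le_range _ _
    exact le_antisymm r1 r2
  · rw [hPtilQ, hQP]; exact hPMP
end

section
/- Let P be a symmetric positive definite r×r matrix and for λ > σ_max(P) define P̃(λ) = (P⁻¹ − λ⁻¹I)⁻¹ and γ(λ) = (1/2)[ln det P − ln det P̃(λ) + tr(P⁻¹ P̃(λ)) − r]. Then γ is strictly decreasing in λ on (σ_max(P), ∞), γ(λ) → 0 as λ → ∞, and γ(λ) → ∞ as λ → σ_max(P)⁺; hence for every c > 0 there is a unique λ > σ_max(P) with γ(λ) = c. -/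
open Filter

noncomputable def psi (x : ℝ) : ℝ := x - 1 - Real.log x

lemma psi_nonneg {x : ℝ} (hx : 0 < x) : 0 ≤ psi x := by
  have := Real.log_le_sub_one_of_pos hx
  simp only [psi]; linarith

lemma psi_strictMonoOn : StrictMonoOn psi (Set.Ici 1) := by
  have h1 : ContinuousOn psi (Set.Ici 1) := by
    apply ContinuousOn.sub (by fun_prop)
    exact Real.continuousOn_log.mono (by intro x hx; simp at hx ⊢; linarith)
  apply strictMonoOn_of_deriv_pos (convex_Ici 1) h1
  intro x hx
  rw [interior_Ici] at hx
  have hx0 : (0:ℝ) < x := lt_trans one_pos hx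
  have : HasDerivAt psi (1 - x⁻¹) x := by
    exact ((hasDerivAt_id x).sub_const 1).sub (Real.hasDerivAt_log (ne_of_gt hx0))
  rw [this.deriv]
  have : x⁻¹ < 1 := by rw [inv_lt_one_iff₀]; right; exact hx
  linarith

lemma psi_tendsto_atTop : Tendsto psi atTop atTop := by
  apply tendsto_atTop_mono' _ _ (tendsto_atTop_add_const_right atTop (-1) (tendsto_id.atTop_div_const (by norm_num : (0:ℝ) < 2)))
  filter_upwards [eventually_gt_atTop (0:ℝ)] with x hx
  have h2 : Real.log (x/2) ≤ x/2 - 1 := Real.log_le_sub_one_of_pos (by linarith)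
  have h3 : Real.log 2 ≤ 1 := by
    have := Real.log_le_sub_one_of_pos (two_pos (α := ℝ)); linarith
  have h4 : Real.log x = Real.log (x/2) + Real.log 2 := by
    rw [← Real.log_mul (by linarith) two_ne_zero]; ring_nf
  simp only [psi, id]
  linarith

section G

variable {r : ℕ} {μ : Fin r → ℝ} {smax : ℝ}

noncomputable def gfun (μ : Fin r → ℝ) (lam : ℝ) : ℝ :=
  (1/2) * ∑ i, psi (lam / (lam - μ i))

lemma u_mem (hpos : ∀ i, 0 < μ i) (hle : ∀ i, μ i ≤ smax) {lam : ℝ} (hlam : smax < lam) (i : Fin r) :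
    1 < lam / (lam - μ i) := by
  have h1 : 0 < lam - μ i := by have := hle i; linarith
  rw [lt_div_iff₀ h1]; rw [one_mul]; have := hpos i; linarith

lemma gfun_strictAntiOn (hr : 0 < r) (hpos : ∀ i, 0 < μ i) (hle : ∀ i, μ i ≤ smax) : StrictAntiOn (gfun μ) (Set.Ioi smax) := by
  intro a ha b hb hab
  simp only [Set.mem_Ioi] at ha hb
  have key : ∀ i : Fin r, psi (b / (b - μ i)) < psi (a / (a - μ i)) := by
    intro i
    have hua := u_mem hpos hle ha i
    have hub := u_mem hpos hle hb i
    apply psi_strictMonoOn (le_of_lt hub) (le_of_lt hua)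
    have h1 : 0 < a - μ i := by have := hle i; linarith
    have h2 : 0 < b - μ i := by have := hle i; linarith
    rw [div_lt_div_iff₀ h2 h1]
    have := hpos i; nlinarith
  unfold gfun
  have : (∑ i, psi (b / (b - μ i))) < ∑ i, psi (a / (a - μ i)) := by
    apply Finset.sum_lt_sum_of_nonempty
    · exact Finset.univ_nonempty_iff.mpr ⟨⟨0, hr⟩⟩
    · intro i _; exact key i
  linarith

lemma gfun_tendsto_zero : Tendsto (gfun μ) atTop (nhds 0) := by
  have h0 : ∀ i : Fin r, Tendsto (fun lam => psi (lam / (lam - μ i))) atTop (nhds 0) := by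
    intro i
    have h1 : Tendsto (fun lam : ℝ => lam / (lam - μ i)) atTop (nhds 1) := by
      have h2 : Tendsto (fun lam : ℝ => 1 + μ i / (lam - μ i)) atTop (nhds 1) := by
        have h3 : Tendsto (fun lam : ℝ => μ i / (lam - μ i)) atTop (nhds 0) :=
          tendsto_const_nhds.div_atTop (tendsto_atTop_add_const_right atTop (-(μ i)) tendsto_id)
        simpa using tendsto_const_nhds.add h3
      apply h2.congr'
      filter_upwards [eventually_gt_atTop (μ i)] with lam hlam
      have : lam - μ i ≠ 0 := by linarith
      field_simp
      ring
    have hcont : ContinuousAt psi 1 := by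
      unfold psi; fun_prop (disch := norm_num)
    have := hcont.tendsto.comp h1
    simpa [psi, Function.comp_def] using this
  have := tendsto_finset_sum Finset.univ (fun i _ => h0 i)
  have h4 := this.const_mul (1/2 : ℝ)
  simp only [Finset.sum_const_zero, mul_zero] at h4
  unfold gfun
  exact h4

lemma gfun_tendsto_atTop (hpos : ∀ i, 0 < μ i) (hle : ∀ i, μ i ≤ smax) (i0 : Fin r) (hi0 : μ i0 = smax) :
    Tendsto (gfun μ) (nhdsWithin smax (Set.Ioi smax)) atTop := by
  have hsm : 0 < smax := hi0 ▸ hpos i0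
  have hu : Tendsto (fun lam : ℝ => lam / (lam - smax)) (nhdsWithin smax (Set.Ioi smax)) atTop := by
    have h1 : Tendsto (fun lam : ℝ => lam - smax) (nhdsWithin smax (Set.Ioi smax))
        (nhdsWithin 0 (Set.Ioi 0)) := by
      apply tendsto_nhdsWithin_of_tendsto_nhds_of_eventually_within
      · have : Tendsto (fun lam : ℝ => lam - smax) (nhds smax) (nhds (smax - smax)) :=
          (continuous_id.sub continuous_const).tendsto smax
        rw [sub_self] at this
        exact this.mono_left nhdsWithin_le_nhds
      · filter_upwards [self_mem_nhdsWithin] with x hx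
        simp only [Set.mem_Ioi] at hx ⊢; linarith
    have h2 : Tendsto (fun lam : ℝ => (lam - smax)⁻¹) (nhdsWithin smax (Set.Ioi smax)) atTop :=
      tendsto_inv_nhdsGT_zero.comp h1
    have h3 : Tendsto (fun lam : ℝ => lam) (nhdsWithin smax (Set.Ioi smax)) (nhds smax) :=
      tendsto_id.mono_left nhdsWithin_le_nhds
    have := h3.pos_mul_atTop hsm h2
    simpa [div_eq_mul_inv] using this
  have hcomp : Tendsto (fun lam => psi (lam / (lam - smax)))
      (nhdsWithin smax (Set.Ioi smax)) atTop := psi_tendsto_atTop.comp hu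
  apply tendsto_atTop_mono' _ _ (hcomp.atTop_div_const (by norm_num : (0:ℝ) < 2))
  filter_upwards [self_mem_nhdsWithin] with lam hlam
  simp only [Set.mem_Ioi] at hlam
  have hbound : psi (lam / (lam - smax)) ≤ ∑ i, psi (lam / (lam - μ i)) := by
    have := Finset.single_le_sum (f := fun i => psi (lam / (lam - μ i)))
      (fun i _ => psi_nonneg (lt_trans one_pos (u_mem hpos hle hlam i)))
      (Finset.mem_univ i0)
    simp only [hi0] at this
    exact this
  unfold gfun; linarith

end G


lemma gfun_continuousOn {r : ℕ} {μ : Fin r → ℝ} {smax : ℝ}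
    (hpos : ∀ i, 0 < μ i) (hle : ∀ i, μ i ≤ smax) :
    ContinuousOn (gfun μ) (Set.Ioi smax) := by
  unfold gfun
  apply ContinuousOn.mul continuousOn_const
  apply continuousOn_finset_sum
  intro i _
  have hu : ContinuousOn (fun lam : ℝ => lam / (lam - μ i)) (Set.Ioi smax) := by
    apply ContinuousOn.div continuousOn_id (by fun_prop)
    intro x hx
    simp only [Set.mem_Ioi] at hx
    have := hle i; intro h; rw [sub_eq_zero] at h; rw [h] at hx; linarith
  have hne : ∀ x ∈ Set.Ioi smax, x / (x - μ i) ≠ 0 := by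
    intro x hx
    exact ne_of_gt (lt_trans one_pos (u_mem hpos hle hx i))
  unfold psi
  exact (hu.sub continuousOn_const).sub (hu.log hne)

open Matrix

lemma gamma_eq_sum {r : ℕ} (P : Matrix (Fin r) (Fin r) ℝ) (hP : P.PosDef)
    {lam : ℝ} (hlam : ∀ i, hP.1.eigenvalues i < lam) (hlam0 : 0 < lam) :
    Real.log P.det - Real.log ((P⁻¹ - lam⁻¹ • 1)⁻¹).det
      + (P⁻¹ * (P⁻¹ - lam⁻¹ • 1)⁻¹).trace - r
    = ∑ i, (Real.log (1 - lam⁻¹ * hP.1.eigenvalues i)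
        + (1 - lam⁻¹ * hP.1.eigenvalues i)⁻¹ - 1) := by
  set μ := hP.1.eigenvalues with hμ
  set U : Matrix (Fin r) (Fin r) ℝ := (hP.1.eigenvectorUnitary : Matrix (Fin r) (Fin r) ℝ) with hU
  have hU1 : U * star U = 1 := (Matrix.mem_unitaryGroup_iff).mp hP.1.eigenvectorUnitary.2
  have hU2 : star U * U = 1 := (Matrix.mem_unitaryGroup_iff').mp hP.1.eigenvectorUnitary.2
  have hspec : P = U * diagonal μ * star U := by
    have := hP.1.spectral_theorem
    simpa [RCLike.ofReal_real_eq_id] using this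
  set d : Fin r → ℝ := fun i => 1 - lam⁻¹ * μ i with hd
  have hdpos : ∀ i, 0 < d i := by
    intro i
    have h1 : μ i < lam := hlam i
    have h2 : lam⁻¹ * μ i < lam⁻¹ * lam :=
      mul_lt_mul_of_pos_left h1 (inv_pos.mpr hlam0)
    rw [inv_mul_cancel₀ (ne_of_gt hlam0)] at h2
    simp only [hd]; linarith
  have hdne : ∀ i, d i ≠ 0 := fun i => ne_of_gt (hdpos i)
  have hconj_mul : ∀ f g : Fin r → ℝ,
      (U * diagonal f * star U) * (U * diagonal g * star U) = U * diagonal (f * g) * star U := by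
    intro f g
    calc (U * diagonal f * star U) * (U * diagonal g * star U)
        = U * diagonal f * (star U * U) * diagonal g * star U := by
          simp only [Matrix.mul_assoc]
      _ = U * diagonal (f * g) * star U := by
          rw [hU2, mul_one, Matrix.mul_assoc U, diagonal_mul_diagonal]
          rfl
  have hdetconj : ∀ f : Fin r → ℝ, (U * diagonal f * star U).det = ∏ i, f i := by
    intro f
    rw [det_mul, det_mul, mul_comm U.det, mul_assoc, ← det_mul, hU1]
    simp
  have htrconj : ∀ X : Matrix (Fin r) (Fin r) ℝ, (U * X * star U).trace = X.trace := by
    intro X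
    rw [trace_mul_cycle, hU2, one_mul]
  have hA : (1 : Matrix (Fin r) (Fin r) ℝ) - lam⁻¹ • P = U * diagonal d * star U := by
    have h1 : (1 : Matrix (Fin r) (Fin r) ℝ) = U * diagonal (fun _ => (1:ℝ)) * star U := by
      rw [show (diagonal (fun _ => (1:ℝ))) = 1 from diagonal_one, mul_one, hU1]
    have h2 : lam⁻¹ • P = U * diagonal (fun i => lam⁻¹ * μ i) * star U := by
      rw [hspec]
      rw [show (fun i => lam⁻¹ * μ i) = lam⁻¹ • μ from rfl, diagonal_smul,
        Matrix.mul_smul, Matrix.smul_mul]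
    rw [h2]
    nth_rewrite 1 [h1]
    rw [← Matrix.sub_mul, ← Matrix.mul_sub, diagonal_sub]
  have hAinv : ((1 : Matrix (Fin r) (Fin r) ℝ) - lam⁻¹ • P)⁻¹
      = U * diagonal (fun i => (d i)⁻¹) * star U := by
    rw [hA]
    apply Matrix.inv_eq_right_inv
    rw [hconj_mul]
    have : d * (fun i => (d i)⁻¹) = fun _ => (1:ℝ) :=
      funext fun i => mul_inv_cancel₀ (hdne i)
    rw [this, show (diagonal (fun _ => (1:ℝ))) = 1 from diagonal_one, mul_one, hU1]
  have hdetP : P.det ≠ 0 := ne_of_gt hP.det_pos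
  have hP1A : P⁻¹ - lam⁻¹ • (1 : Matrix (Fin r) (Fin r) ℝ)
      = P⁻¹ * (1 - lam⁻¹ • P) := by
    rw [Matrix.mul_sub, mul_one, Matrix.mul_smul, Matrix.nonsing_inv_mul _ (isUnit_iff_ne_zero.mpr hdetP)]
  have hPtilP : (P⁻¹ - lam⁻¹ • (1 : Matrix (Fin r) (Fin r) ℝ))⁻¹
      = ((1 : Matrix (Fin r) (Fin r) ℝ) - lam⁻¹ • P)⁻¹ * P := by
    rw [hP1A, Matrix.mul_inv_rev, Matrix.nonsing_inv_nonsing_inv _ (isUnit_iff_ne_zero.mpr hdetP)]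
  have hprod_pos : 0 < ∏ i, d i := Finset.prod_pos (fun i _ => hdpos i)
  -- determinant computation
  have hdet1 : ((P⁻¹ - lam⁻¹ • (1 : Matrix (Fin r) (Fin r) ℝ))⁻¹).det
      = (∏ i, d i)⁻¹ * P.det := by
    rw [hPtilP, det_mul, hAinv, hdetconj, ← Finset.prod_inv_distrib]
  have hlogdet : Real.log ((P⁻¹ - lam⁻¹ • (1 : Matrix (Fin r) (Fin r) ℝ))⁻¹).det
      = - Real.log (∏ i, d i) + Real.log P.det := by
    rw [hdet1, Real.log_mul (inv_ne_zero (ne_of_gt hprod_pos)) hdetP, Real.log_inv]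
  -- trace computation
  have htr : (P⁻¹ * (P⁻¹ - lam⁻¹ • (1 : Matrix (Fin r) (Fin r) ℝ))⁻¹).trace
      = ∑ i, (d i)⁻¹ := by
    rw [hPtilP, ← Matrix.mul_assoc, trace_mul_cycle,
      Matrix.mul_nonsing_inv _ (isUnit_iff_ne_zero.mpr hdetP), one_mul, hAinv, htrconj,
      trace_diagonal]
  rw [hlogdet, htr, Real.log_prod (fun i _ => hdne i)]
  rw [Finset.sum_sub_distrib, Finset.sum_add_distrib, Finset.sum_const]
  simp only [hd]
  rw [Finset.card_univ, Fintype.card_fin]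

  ring

theorem stmt5 (r : ℕ) (hr : 0 < r) (P : Matrix (Fin r) (Fin r) ℝ) (hP : P.PosDef)
    (smax : ℝ) (hsmax : smax = ⨆ i, hP.1.eigenvalues i)
    (Ptil : ℝ → Matrix (Fin r) (Fin r) ℝ)
    (hPtil : ∀ lam, Ptil lam = (P⁻¹ - lam⁻¹ • 1)⁻¹)
    (γ : ℝ → ℝ)
    (hγ : ∀ lam, γ lam = (1 / 2) * (Real.log P.det - Real.log (Ptil lam).det
        + (P⁻¹ * Ptil lam).trace - r)) :
    StrictAntiOn γ (Set.Ioi smax) ∧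
    Tendsto γ atTop (nhds 0) ∧
    Tendsto γ (nhdsWithin smax (Set.Ioi smax)) atTop ∧
    ∀ c : ℝ, 0 < c → ∃! lam : ℝ, lam ∈ Set.Ioi smax ∧ γ lam = c := by
  haveI : Nonempty (Fin r) := ⟨⟨0, hr⟩⟩
  set μ := hP.1.eigenvalues with hμ
  have hpos : ∀ i, 0 < μ i := fun i => hP.eigenvalues_pos i
  have hle : ∀ i, μ i ≤ smax := by
    intro i; rw [hsmax]; exact le_ciSup (Finite.bddAbove_range μ) i
  obtain ⟨i0, hi0⟩ : ∃ i0, μ i0 = smax := by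
    obtain ⟨i0, hi0⟩ := exists_eq_ciSup_of_finite (f := μ)
    exact ⟨i0, by rw [hi0, hsmax]⟩
  have hsm0 : 0 < smax := hi0 ▸ hpos i0
  have hge : ∀ lam ∈ Set.Ioi smax, γ lam = gfun μ lam := by
    intro lam hlam
    simp only [Set.mem_Ioi] at hlam
    have hlam0 : 0 < lam := lt_trans hsm0 hlam
    rw [hγ, hPtil, gamma_eq_sum P hP (fun i => lt_of_le_of_lt (hle i) hlam) hlam0]
    unfold gfun
    congr 1
    apply Finset.sum_congr rfl
    intro i _
    have h1 : lam - μ i > 0 := by have := hle i; linarith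
    have h2 : (1 : ℝ) - lam⁻¹ * μ i = (lam / (lam - μ i))⁻¹ := by
      rw [inv_div]
      field_simp
    rw [h2, Real.log_inv, inv_inv]
    unfold psi
    ring
  have hanti : StrictAntiOn γ (Set.Ioi smax) := by
    intro a ha b hb hab
    rw [hge a ha, hge b hb]
    exact gfun_strictAntiOn hr hpos hle ha hb hab
  have htop : Tendsto γ atTop (nhds 0) := by
    apply (gfun_tendsto_zero (μ := μ)).congr'
    filter_upwards [eventually_gt_atTop smax] with lam hlam
    exact (hge lam hlam).symm
  have hbot : Tendsto γ (nhdsWithin smax (Set.Ioi smax)) atTop := by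
    apply (gfun_tendsto_atTop hpos hle i0 hi0).congr'
    filter_upwards [self_mem_nhdsWithin] with lam hlam
    exact (hge lam hlam).symm
  refine ⟨hanti, htop, hbot, ?_⟩
  intro c hc
  have hne : (nhdsWithin smax (Set.Ioi smax)).NeBot := nhdsGT_neBot smax
  obtain ⟨a, hac, ha⟩ : ∃ a, c < γ a ∧ a ∈ Set.Ioi smax :=
    ((hbot.eventually (eventually_gt_atTop c)).and self_mem_nhdsWithin).exists
  obtain ⟨b, hbc, hab⟩ : ∃ b, γ b < c ∧ a < b :=
    ((htop.eventually (gt_mem_nhds hc)).and (eventually_gt_atTop a)).exists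
  have hIccsub : Set.Icc a b ⊆ Set.Ioi smax := fun x hx =>
    Set.mem_Ioi.mpr (lt_of_lt_of_le ha hx.1)
  have hcont : ContinuousOn γ (Set.Icc a b) :=
    ((gfun_continuousOn hpos hle).mono hIccsub).congr (fun x hx => hge x (hIccsub hx))
  have hivt := intermediate_value_Icc' (le_of_lt hab) hcont
  obtain ⟨lam, hlamIcc, hlamc⟩ := hivt ⟨le_of_lt hbc, le_of_lt hac⟩
  refine ⟨lam, ⟨hIccsub hlamIcc, hlamc⟩, ?_⟩
  intro y ⟨hy1, hy2⟩
  exact hanti.injOn hy1 (hIccsub hlamIcc) (by rw [hy2, hlamc])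
end

section
/- Let A be n×n, C be p×n real matrices and let P̃ be symmetric positive semidefinite n×n, R = DDᵀ positive definite p×p, Q = BBᵀ positive semidefinite. Define G = (A P̃ Cᵀ + B Dᵀ)(C P̃ Cᵀ + R)⁻¹ and P' = A P̃ Aᵀ − G (C P̃ Cᵀ + R) Gᵀ + Q. Then P' is symmetric positive semidefinite. -/
open Matrix

theorem stmt9 (n p q : ℕ)
    (A : Matrix (Fin n) (Fin n) ℝ) (C : Matrix (Fin p) (Fin n) ℝ)
    (B : Matrix (Fin n) (Fin q) ℝ) (D : Matrix (Fin p) (Fin q) ℝ)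
    (Ptil : Matrix (Fin n) (Fin n) ℝ) (hPtil : Ptil.PosSemidef)
    (hR : (D * Dᵀ).PosDef)
    (G : Matrix (Fin n) (Fin p) ℝ)
    (hG : G = (A * Ptil * Cᵀ + B * Dᵀ) * (C * Ptil * Cᵀ + D * Dᵀ)⁻¹)
    (P' : Matrix (Fin n) (Fin n) ℝ)
    (hP' : P' = A * Ptil * Aᵀ - G * (C * Ptil * Cᵀ + D * Dᵀ) * Gᵀ + B * Bᵀ) :
    P'.PosSemidef := by
  set S : Matrix (Fin p) (Fin p) ℝ := C * Ptil * Cᵀ + D * Dᵀ with hS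
  set M : Matrix (Fin n) (Fin p) ℝ := A * Ptil * Cᵀ + B * Dᵀ with hM
  have hCPCt : (C * Ptil * Cᵀ).PosSemidef := by
    have := hPtil.mul_mul_conjTranspose_same C
    simpa [conjTranspose_eq_transpose_of_trivial] using this
  have hSpd : S.PosDef := by
    rw [hS, add_comm]; exact Matrix.PosDef.add_posSemidef hR hCPCt
  have hdet : IsUnit S.det := hSpd.det_pos.ne'.isUnit
  have hSt : Sᵀ = S := by
    have := hSpd.isHermitian
    simpa [conjTranspose_eq_transpose_of_trivial, Matrix.IsSymm] using this
  have hPt : Ptilᵀ = Ptil := by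
    have := hPtil.isHermitian
    simpa [conjTranspose_eq_transpose_of_trivial, Matrix.IsSymm] using this
  have h1 : G * S = M := by
    rw [hG]; exact Matrix.nonsing_inv_mul_cancel_right _ _ hdet
  have h2 : S * Gᵀ = Mᵀ := by
    have := congrArg Matrix.transpose h1
    simpa [Matrix.transpose_mul, hSt] using this
  have key : P' = (A - G * C) * Ptil * (A - G * C)ᵀ + (B - G * D) * (B - G * D)ᵀ := by
    have expand : (A - G * C) * Ptil * (A - G * C)ᵀ + (B - G * D) * (B - G * D)ᵀ
        = A * Ptil * Aᵀ + B * Bᵀ + G * (S * Gᵀ) - M * Gᵀ - G * Mᵀ := by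
      rw [hS, hM]
      simp only [Matrix.transpose_sub, Matrix.transpose_add, Matrix.transpose_mul,
        Matrix.transpose_transpose, hPt, Matrix.sub_mul, Matrix.mul_sub,
        Matrix.add_mul, Matrix.mul_add, Matrix.mul_assoc]
      abel
    rw [expand, h2, ← h1, hP']
    simp only [hM, hS, Matrix.transpose_add, Matrix.transpose_mul, Matrix.transpose_transpose,
      hPt, Matrix.mul_add, Matrix.add_mul, Matrix.mul_assoc]
    abel
  rw [key]
  have hA : ((A - G * C) * Ptil * (A - G * C)ᵀ).PosSemidef := by
    have := hPtil.mul_mul_conjTranspose_same (A - G * C)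
    simpa [conjTranspose_eq_transpose_of_trivial] using this
  have hB : ((B - G * D) * (B - G * D)ᵀ).PosSemidef := by
    have := Matrix.posSemidef_self_mul_conjTranspose (B - G * D)
    simpa [conjTranspose_eq_transpose_of_trivial] using this
  exact hA.add hB
end

section
/- Let A be n×n, Q = BBᵀ positive semidefinite, C p×n, R positive definite. Let P and P̄ be symmetric positive semidefinite matrices with the same image, with reduced SVDs P = U D Uᵀ, P̄ = U D̄ Uᵀ where D, D̄ are positive definite. Then, with Ã = AU and C̃ = CU, the matrices r(P) = Ã(D⁻¹ + C̃ᵀ R⁻¹ C̃)⁻¹ Ãᵀ + Q and r(P̄) = Ã(D̄⁻¹ + C̃ᵀ R⁻¹ C̃)⁻¹ Ãᵀ + Q have equal kernels, hence equal images. -/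
open Matrix

private lemma ker_aux {n r q : ℕ} (At : Matrix (Fin n) (Fin r) ℝ) (B : Matrix (Fin n) (Fin q) ℝ)
    (N : Matrix (Fin r) (Fin r) ℝ) (hN : N.PosDef) :
    LinearMap.ker (At * N * Atᵀ + B * Bᵀ).mulVecLin
      = LinearMap.ker ((fromCols At B)ᵀ).mulVecLin := by
  ext v
  simp only [LinearMap.mem_ker, mulVecLin_apply, transpose_fromCols, fromRows_mulVec]
  have hsplit : (At * N * Atᵀ + B * Bᵀ) *ᵥ v
      = At *ᵥ (N *ᵥ (Atᵀ *ᵥ v)) + B *ᵥ (Bᵀ *ᵥ v) := by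
    simp [add_mulVec, mulVec_mulVec, Matrix.mul_assoc]
  constructor
  · intro h
    set a := Atᵀ *ᵥ v with ha
    set b := Bᵀ *ᵥ v with hb
    have h2 : a ⬝ᵥ (N *ᵥ a) + b ⬝ᵥ b = 0 := by
      have h3 := congr_arg (fun w => v ⬝ᵥ w) h
      simpa [hsplit, dotProduct_add, dotProduct_mulVec, ← mulVec_transpose, ha, hb] using h3
    have hna : 0 ≤ a ⬝ᵥ (N *ᵥ a) := by simpa using hN.posSemidef.dotProduct_mulVec_nonneg a
    have hnb : 0 ≤ b ⬝ᵥ b := by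
      have := dotProduct_self_star_nonneg (R := ℝ) b; simpa using this
    have hza : a ⬝ᵥ (N *ᵥ a) = 0 := le_antisymm (by linarith) hna
    have hzb : b ⬝ᵥ b = 0 := le_antisymm (by linarith) hnb
    have hA : a = 0 := by
      by_contra hc
      have := hN.dotProduct_mulVec_pos hc
      simp only [star_trivial] at this
      exact absurd hza (ne_of_gt this)
    have hB : b = 0 := dotProduct_self_eq_zero.mp hzb
    ext i
    cases i with
    | inl i => simpa using congr_fun hA i
    | inr i => simpa using congr_fun hB i
  · intro h
    have hA : Atᵀ *ᵥ v = 0 := by ext i; simpa using congr_fun h (Sum.inl i)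
    have hB : Bᵀ *ᵥ v = 0 := by ext i; simpa using congr_fun h (Sum.inr i)
    simp [hsplit, hA, hB]

private lemma range_aux {n r q : ℕ} (At : Matrix (Fin n) (Fin r) ℝ) (B : Matrix (Fin n) (Fin q) ℝ)
    (N : Matrix (Fin r) (Fin r) ℝ) (hN : N.PosDef) :
    LinearMap.range (At * N * Atᵀ + B * Bᵀ).mulVecLin
      = LinearMap.range (fromCols At B).mulVecLin := by
  set M := fromCols At B with hM
  have hle : LinearMap.range (At * N * Atᵀ + B * Bᵀ).mulVecLin
      ≤ LinearMap.range M.mulVecLin := by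
    rintro x ⟨v, rfl⟩
    refine ⟨Sum.elim (N *ᵥ (Atᵀ *ᵥ v)) (Bᵀ *ᵥ v), ?_⟩
    simp only [hM, mulVecLin_apply, fromCols_mulVec_sumElim, add_mulVec, mulVec_mulVec,
      Matrix.mul_assoc]
  have h1 := LinearMap.finrank_range_add_finrank_ker (At * N * Atᵀ + B * Bᵀ).mulVecLin
  have h2 := LinearMap.finrank_range_add_finrank_ker (Mᵀ).mulVecLin
  rw [ker_aux At B N hN, ← hM] at h1
  have h3 : Module.finrank ℝ (LinearMap.range (Mᵀ).mulVecLin)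
      = Module.finrank ℝ (LinearMap.range M.mulVecLin) := by
    have := Matrix.rank_transpose M
    simpa [Matrix.rank] using this
  have h4 : Module.finrank ℝ (LinearMap.range M.mulVecLin)
      ≤ Module.finrank ℝ (LinearMap.range (At * N * Atᵀ + B * Bᵀ).mulVecLin) := by
    omega
  exact Submodule.eq_of_le_of_finrank_le hle h4

theorem stmt10 (n r p q : ℕ)
    (A : Matrix (Fin n) (Fin n) ℝ) (C : Matrix (Fin p) (Fin n) ℝ)
    (B : Matrix (Fin n) (Fin q) ℝ) (R : Matrix (Fin p) (Fin p) ℝ) (hR : R.PosDef)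
    (U : Matrix (Fin n) (Fin r) ℝ) (hU : Uᵀ * U = 1)
    (D Dbar : Matrix (Fin r) (Fin r) ℝ) (hD : D.PosDef) (hDbar : Dbar.PosDef)
    (P Pbar : Matrix (Fin n) (Fin n) ℝ)
    (hP : P = U * D * Uᵀ) (hPbar : Pbar = U * Dbar * Uᵀ)
    (Atil : Matrix (Fin n) (Fin r) ℝ) (hAtil : Atil = A * U)
    (Ctil : Matrix (Fin p) (Fin r) ℝ) (hCtil : Ctil = C * U)
    (rP rPbar : Matrix (Fin n) (Fin n) ℝ)
    (hrP : rP = Atil * (D⁻¹ + Ctilᵀ * R⁻¹ * Ctil)⁻¹ * Atilᵀ + B * Bᵀ)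
    (hrPbar : rPbar = Atil * (Dbar⁻¹ + Ctilᵀ * R⁻¹ * Ctil)⁻¹ * Atilᵀ + B * Bᵀ) :
    LinearMap.ker rP.mulVecLin = LinearMap.ker rPbar.mulVecLin ∧
    LinearMap.range rP.mulVecLin = LinearMap.range rPbar.mulVecLin := by
  have hS : (Ctilᵀ * R⁻¹ * Ctil).PosSemidef := by
    have h1 : (R⁻¹).PosDef := hR.inv
    have := h1.posSemidef.conjTranspose_mul_mul_same Ctil
    simpa [conjTranspose_eq_transpose_of_trivial] using this
  have hN : ((D⁻¹ + Ctilᵀ * R⁻¹ * Ctil)⁻¹).PosDef := (hD.inv.add_posSemidef hS).inv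
  have hNbar : ((Dbar⁻¹ + Ctilᵀ * R⁻¹ * Ctil)⁻¹).PosDef := (hDbar.inv.add_posSemidef hS).inv
  subst hrP hrPbar
  exact ⟨(ker_aux Atil B _ hN).trans (ker_aux Atil B _ hNbar).symm,
    (range_aux Atil B _ hN).trans (range_aux Atil B _ hNbar).symm⟩
end

section
/- Let P̃ and P be symmetric positive semidefinite n×n matrices with the same image and P positive definite on that image, such that P̃ ≥ P and for each common nonzero eigendirection the eigenvalue ratios σᵢ(P̃)/σᵢ(P) satisfy −ln(σᵢ(P̃)/σᵢ(P)) + σᵢ(P̃)/σᵢ(P) − 1 ≤ 2c for a constant c > 0. Then P̃ ≤ ρ P where ρ > 1 is the unique solution of −ln ρ + ρ − 1 = 2c. -/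
/-!
Conjugating by the isometry `U` reduces both Loewner inequalities to the diagonal ones
`σ i ≤ σtil i` and `σtil i ≤ ρ * σ i`. Since `h x = -log x + x - 1` is strictly increasing on
`[1, ∞)`, the ratio `t = σtil i / σ i ≥ 1` satisfies `h t ≤ 2 c = h ρ`, hence `t ≤ ρ`.
-/

open Matrix Real Set

theorem strictMonoOn_neg_log_add_sub_one :
    StrictMonoOn (fun x : ℝ ↦ -log x + x - 1) (Ici 1) := by
  intro s (hs : 1 ≤ s) t (ht : 1 ≤ t) hst
  have hs0 : 0 < s := by linarith
  have hlog : log (t / s) < t / s - 1 :=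
    log_lt_sub_one_of_pos (by positivity) (by rw [ne_eq, div_eq_one_iff_eq hs0.ne']; exact hst.ne')
  have hratio : t / s - 1 ≤ t - s := by
    rw [div_sub_one hs0.ne', div_le_iff₀ hs0]
    nlinarith
  rw [log_div (by positivity) hs0.ne'] at hlog
  dsimp only
  linarith

theorem le_mul_of_neg_log_div_add_div_sub_one_le {s t ρ : ℝ} (hs : 0 < s) (hst : s ≤ t)
    (hρ : 1 ≤ ρ) (h : -log (t / s) + t / s - 1 ≤ -log ρ + ρ - 1) : t ≤ ρ * s := by
  have ht : 1 ≤ t / s := (one_le_div hs).mpr hst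
  rw [← div_le_iff₀ hs]
  exact (strictMonoOn_neg_log_add_sub_one.le_iff_le ht hρ).mp h

namespace Matrix

variable {m r R : Type*} [Fintype m] [Fintype r] [DecidableEq r]
  [CommRing R] [PartialOrder R] [StarRing R] [StarOrderedRing R]

theorem posSemidef_mul_diagonal_mul_conjTranspose_iff {U : Matrix m r R} (hU : Uᴴ * U = 1)
    (d : r → R) : (U * diagonal d * Uᴴ).PosSemidef ↔ ∀ i, 0 ≤ d i := by
  rw [← posSemidef_diagonal_iff]
  refine ⟨fun h ↦ ?_, fun h ↦ h.mul_mul_conjTranspose_same U⟩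
  have hconj : Uᴴ * (U * diagonal d * Uᴴ) * U = diagonal d := by
    simp only [Matrix.mul_assoc, ← Matrix.mul_assoc Uᴴ U, hU, Matrix.one_mul, Matrix.mul_one]
  simpa [hconj] using h.conjTranspose_mul_mul_same U

end Matrix

theorem stmt12_general (n r : ℕ) (P Ptil : Matrix (Fin n) (Fin n) ℝ)
    (U : Matrix (Fin n) (Fin r) ℝ) (hU : Uᵀ * U = 1)
    (σ σtil : Fin r → ℝ) (hσ : ∀ i, 0 < σ i)
    (hP : P = U * Matrix.diagonal σ * Uᵀ)
    (hPtil : Ptil = U * Matrix.diagonal σtil * Uᵀ)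
    (hge : (Ptil - P).PosSemidef)
    (c : ℝ)
    (hratio : ∀ i, -Real.log (σtil i / σ i) + σtil i / σ i - 1 ≤ 2 * c)
    (ρ : ℝ) (hρ : 1 < ρ) (hρeq : -Real.log ρ + ρ - 1 = 2 * c) :
    (ρ • P - Ptil).PosSemidef := by
  rw [← conjTranspose_eq_transpose_of_trivial] at hU hP hPtil
  have hdiff : Ptil - P = U * diagonal (σtil - σ) * Uᴴ := by
    rw [hP, hPtil, ← Matrix.sub_mul, ← Matrix.mul_sub, diagonal_sub]
    rfl
  have hgoal : ρ • P - Ptil = U * diagonal (ρ • σ - σtil) * Uᴴ := by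
    rw [hP, hPtil, ← Matrix.smul_mul, ← Matrix.mul_smul, ← diagonal_smul, ← Matrix.sub_mul,
      ← Matrix.mul_sub, diagonal_sub]
    rfl
  rw [hdiff, posSemidef_mul_diagonal_mul_conjTranspose_iff hU] at hge
  rw [hgoal, posSemidef_mul_diagonal_mul_conjTranspose_iff hU]
  intro i
  have hle : σtil i ≤ ρ * σ i :=
    le_mul_of_neg_log_div_add_div_sub_one_le (hσ i) (sub_nonneg.mp (hge i)) hρ.le
      (hρeq ▸ hratio i)
  simpa using hle

theorem stmt12 (n r : ℕ) (P Ptil : Matrix (Fin n) (Fin n) ℝ)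
    (U : Matrix (Fin n) (Fin r) ℝ) (hU : Uᵀ * U = 1)
    (σ σtil : Fin r → ℝ) (hσ : ∀ i, 0 < σ i) (hσtil : ∀ i, 0 < σtil i)
    (hP : P = U * Matrix.diagonal σ * Uᵀ)
    (hPtil : Ptil = U * Matrix.diagonal σtil * Uᵀ)
    (hge : (Ptil - P).PosSemidef)
    (c : ℝ) (hc : 0 < c)
    (hratio : ∀ i, -Real.log (σtil i / σ i) + σtil i / σ i - 1 ≤ 2 * c)
    (ρ : ℝ) (hρ : 1 < ρ) (hρeq : -Real.log ρ + ρ - 1 = 2 * c) :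
    (ρ • P - Ptil).PosSemidef :=
  stmt12_general n r P Ptil U hU σ σtil hσ hP hPtil hge c hratio ρ hρ hρeq
end
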